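/- arXiv:2210.03241 — 2 statements merged into one kernel-verified Lean document; each statement's English description precedes it below -/
import Mathlib

section
/- Let α_1 ⊊ α_2 ⊊ … ⊊ α_N be a nested family of subsets of {1,…,n} with |α_1| = k_1 and |α_N| = k_N, and suppose every α_t is stable for the n×n real matrix W. Then the number of pairs (i,j) with w_{ij} > 0 is at least k_N, and the number of pairs (i,j) with w_{ij} < 0 is at least n − k_1. -/
open Finset

/-- Signature of a set: `+1` on `α`, `-1` off `α`. -/
def sgn {n : ℕ} (α : Finset (Fin n)) (i : Fin n) : ℝ := if i ∈ α then 1 else -1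

/-- `α` is a stable set for the weight matrix `W`. -/
def IsStable {n : ℕ} (W : Matrix (Fin n) (Fin n) ℝ) (α : Finset (Fin n)) : Prop :=
  ∀ i, 0 < sgn α i * ∑ j ∈ α, W i j

/-
Each row of the largest set has a positive row sum over that set, hence a positive entry; each
row outside the smallest set has a negative row sum over that set, hence a negative entry.
Distinct rows give distinct entries.
-/

theorem Finset.card_le_card_of_forall_exists_prod_mem {ι κ : Type*} {s : Finset ι}
    {t : Finset (ι × κ)} (h : ∀ i ∈ s, ∃ j, (i, j) ∈ t) : #s ≤ #t := by
  refine card_le_card_of_surjOn Prod.fst fun i hi => ?_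
  obtain ⟨j, hj⟩ := h i hi
  exact ⟨(i, j), hj, rfl⟩

namespace IsStable

variable {n : ℕ} {W : Matrix (Fin n) (Fin n) ℝ} {α : Finset (Fin n)}

theorem exists_pos_of_mem (hα : IsStable W α) {i : Fin n} (hi : i ∈ α) : ∃ j, 0 < W i j := by
  have hsum := hα i
  rw [sgn, if_pos hi, one_mul, ← sum_const_zero] at hsum
  obtain ⟨j, -, hj⟩ := exists_lt_of_sum_lt hsum
  exact ⟨j, hj⟩

theorem exists_neg_of_notMem (hα : IsStable W α) {i : Fin n} (hi : i ∉ α) :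
    ∃ j, W i j < 0 := by
  have hsum := hα i
  rw [sgn, if_neg hi, neg_one_mul, neg_pos, ← sum_const_zero] at hsum
  obtain ⟨j, -, hj⟩ := exists_lt_of_sum_lt hsum
  exact ⟨j, hj⟩

end IsStable

theorem stmt7_general (n N : ℕ) (W : Matrix (Fin n) (Fin n) ℝ)
    (A : Fin (N + 1) → Finset (Fin n))
    (hstab : ∀ t, IsStable W (A t)) :
    (A (Fin.last N)).card ≤
        ((Finset.univ : Finset (Fin n × Fin n)).filter fun p => 0 < W p.1 p.2).card ∧
    n - (A 0).card ≤
        ((Finset.univ : Finset (Fin n × Fin n)).filter fun p => W p.1 p.2 < 0).card := by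
  constructor
  · refine card_le_card_of_forall_exists_prod_mem fun i hi => ?_
    simpa using (hstab (Fin.last N)).exists_pos_of_mem hi
  · calc n - #(A 0) = #(A 0)ᶜ := by rw [card_compl, Fintype.card_fin]
      _ ≤ _ := card_le_card_of_forall_exists_prod_mem fun i hi => ?_
    simpa using (hstab 0).exists_neg_of_notMem (mem_compl.1 hi)

/-- If a strictly nested family `A 0 ⊊ … ⊊ A N` is stable for `W`, then `W` has at
least `|A N|` positive entries and at least `n - |A 0|` negative entries. -/
theorem stmt7 (n N : ℕ) (W : Matrix (Fin n) (Fin n) ℝ)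
    (A : Fin (N + 1) → Finset (Fin n)) (hA : StrictMono A)
    (hstab : ∀ t, IsStable W (A t)) :
    (A (Fin.last N)).card ≤
        ((Finset.univ : Finset (Fin n × Fin n)).filter fun p => 0 < W p.1 p.2).card ∧
    n - (A 0).card ≤
        ((Finset.univ : Finset (Fin n × Fin n)).filter fun p => W p.1 p.2 < 0).card :=
  stmt7_general n N W A hstab
end

section
/- Let W be an n×n real matrix and α ⊆ {1,…,n} a nonempty subset. Then α is stable for W if and only if there exist an entrywise nonnegative n×n matrix X and an entrywise positive n×n matrix Y such that X is invertible, X⁻¹ p_α ≥ 0 entrywise, and W = diag(s_α) · Y · X⁻¹. -/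
open Finset Matrix

def code {n : ℕ} (α : Finset (Fin n)) (i : Fin n) : ℝ := if i ∈ α then 1 else 0

lemma sgn_sq {n : ℕ} (α : Finset (Fin n)) (i : Fin n) : sgn α i * sgn α i = 1 := by
  unfold sgn; split <;> norm_num

lemma code_nonneg {n : ℕ} (α : Finset (Fin n)) (i : Fin n) : 0 ≤ code α i := by
  unfold code; split <;> norm_num

lemma sum_code {n : ℕ} (α : Finset (Fin n)) : ∑ k, code α k = (α.card : ℝ) := by
  simp [code]

lemma tbig (m S u t : ℝ) (hu : 0 < u) (h2 : |m| ≤ S * u) (ht : t = 1 + S) :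
    0 < m + t * u := by
  have h3 : -m ≤ |m| := neg_le_abs m
  have he : m + t * u = (m + |m|) + (S * u - |m|) + u := by rw [ht]; ring
  rw [he]
  have : 0 ≤ m + |m| := by linarith
  have : 0 ≤ S * u - |m| := by linarith
  linarith

lemma sum_mul_code {n : ℕ} (α : Finset (Fin n)) (f : Fin n → ℝ) :
    ∑ j, f j * code α j = ∑ j ∈ α, f j := by
  simp [code, mul_ite, mul_one, mul_zero, Finset.sum_ite_mem]

/-- A nonempty set `α` is stable for `W` iff `W = diag(s_α) · Y · X⁻¹` for some
nonnegative invertible `X` with `X⁻¹ p_α ≥ 0` and some positive `Y`. -/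
theorem stmt12 (n : ℕ) (W : Matrix (Fin n) (Fin n) ℝ) (α : Finset (Fin n))
    (hα : α.Nonempty) :
    IsStable W α ↔
      ∃ X Y : Matrix (Fin n) (Fin n) ℝ,
        (∀ i j, 0 ≤ X i j) ∧ (∀ i j, 0 < Y i j) ∧ IsUnit X ∧
        (∀ i, 0 ≤ (X⁻¹.mulVec (code α)) i) ∧
        W = Matrix.diagonal (sgn α) * Y * X⁻¹ := by
  constructor
  · intro hst
    set u : Fin n → ℝ := fun i => sgn α i * ∑ j ∈ α, W i j with hu_def
    have hu : ∀ i, 0 < u i := hst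
    set M : Matrix (Fin n) (Fin n) ℝ := Matrix.diagonal (sgn α) * W with hM
    have hMc : ∀ i, ∑ j, M i j * code α j = u i := by
      intro i
      rw [sum_mul_code]
      simp [hM, Matrix.diagonal_mul, Finset.mul_sum, hu_def]
    -- choose t large
    set t : ℝ := 1 + ∑ i, ∑ j, |M i j| / u i with ht_def
    have ht' : (0:ℝ) ≤ ∑ i, ∑ j, |M i j| / u i := by
      apply Finset.sum_nonneg; intro i _
      apply Finset.sum_nonneg; intro j _
      exact div_nonneg (abs_nonneg _) (hu i).le
    have ht1 : (1:ℝ) ≤ t := by simp [ht_def]; linarith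
    have ht0 : (0:ℝ) < t := lt_of_lt_of_le one_pos ht1
    have htbig : ∀ i j, 0 < M i j + t * u i := by
      intro i j
      have h1 : |M i j| / u i ≤ ∑ i', ∑ j', |M i' j'| / u i' := by
        calc |M i j| / u i ≤ ∑ j', |M i j'| / u i :=
              Finset.single_le_sum (f := fun j' => |M i j'| / u i)
                (fun k _ => div_nonneg (abs_nonneg _) (hu i).le) (Finset.mem_univ j)
          _ ≤ ∑ i', ∑ j', |M i' j'| / u i' :=
              Finset.single_le_sum (f := fun i' => ∑ j', |M i' j'| / u i')
                (fun k _ => Finset.sum_nonneg fun l _ =>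
                div_nonneg (abs_nonneg _) (hu k).le) (Finset.mem_univ i)
      have h2 : |M i j| ≤ (∑ i', ∑ j', |M i' j'| / u i') * u i := by
        have := mul_le_mul_of_nonneg_right h1 (hu i).le
        rwa [div_mul_cancel₀ _ (hu i).ne'] at this
      exact tbig _ _ _ _ (hu i) h2 ht_def
    set a : ℝ := (α.card : ℝ) with ha_def
    have ha0 : (0:ℝ) ≤ a := by positivity
    have hden : (0:ℝ) < 1 + t * a := by nlinarith
    set s : ℝ := t / (1 + t * a) with hs_def
    have hs0 : 0 ≤ s := div_nonneg ht0.le hden.le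
    have hkey : t - s - t * s * a = 0 := by
      have : s * (1 + t * a) = t := div_mul_cancel₀ _ hden.ne'
      nlinarith
    set X : Matrix (Fin n) (Fin n) ℝ :=
      Matrix.of fun i j => (if i = j then (1:ℝ) else 0) + t * code α i with hX_def
    set Z : Matrix (Fin n) (Fin n) ℝ :=
      Matrix.of fun i j => (if i = j then (1:ℝ) else 0) - s * code α i with hZ_def
    have hXZ : X * Z = 1 := by
      ext i j
      simp only [Matrix.mul_apply, hX_def, hZ_def, Matrix.of_apply, Matrix.one_apply]
      have expand : ∀ k, ((if i = k then (1:ℝ) else 0) + t * code α i) *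
          ((if k = j then (1:ℝ) else 0) - s * code α k)
          = (if i = k then (1:ℝ) else 0) * (if k = j then (1:ℝ) else 0)
            - s * ((if i = k then (1:ℝ) else 0) * code α k)
            + t * code α i * (if k = j then (1:ℝ) else 0)
            - t * s * (code α i * code α k) := by intro k; ring
      simp only [expand]
      have S1 : ∑ k, (if i = k then (1:ℝ) else 0) * (if k = j then 1 else 0)
          = if i = j then 1 else 0 := by
        simp [ite_mul, one_mul, zero_mul]
      have S2 : ∑ k, s * ((if i = k then (1:ℝ) else 0) * code α k) = s * code α i := by
        rw [← Finset.mul_sum]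
        simp [ite_mul, one_mul, zero_mul]
      have S3 : ∑ k, t * code α i * (if k = j then (1:ℝ) else 0) = t * code α i := by
        rw [← Finset.mul_sum]
        simp
      have S4 : ∑ k, t * s * (code α i * code α k) = t * s * (code α i * a) := by
        rw [← Finset.mul_sum, ← Finset.mul_sum, sum_code]
      rw [Finset.sum_sub_distrib, Finset.sum_add_distrib, Finset.sum_sub_distrib,
        S1, S2, S3, S4]
      linear_combination code α i * hkey
    have hZX : Z * X = 1 := by
      ext i j
      simp only [Matrix.mul_apply, hX_def, hZ_def, Matrix.of_apply, Matrix.one_apply]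
      have expand : ∀ k, ((if i = k then (1:ℝ) else 0) - s * code α i) *
          ((if k = j then (1:ℝ) else 0) + t * code α k)
          = (if i = k then (1:ℝ) else 0) * (if k = j then (1:ℝ) else 0)
            + t * ((if i = k then (1:ℝ) else 0) * code α k)
            - s * code α i * (if k = j then (1:ℝ) else 0)
            - t * s * (code α i * code α k) := by intro k; ring
      simp only [expand]
      have S1 : ∑ k, (if i = k then (1:ℝ) else 0) * (if k = j then 1 else 0)
          = if i = j then 1 else 0 := by
        simp [ite_mul, one_mul, zero_mul]
      have S2 : ∑ k, t * ((if i = k then (1:ℝ) else 0) * code α k) = t * code α i := by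
        rw [← Finset.mul_sum]
        simp [ite_mul, one_mul, zero_mul]
      have S3 : ∑ k, s * code α i * (if k = j then (1:ℝ) else 0) = s * code α i := by
        rw [← Finset.mul_sum]
        simp
      have S4 : ∑ k, t * s * (code α i * code α k) = t * s * (code α i * a) := by
        rw [← Finset.mul_sum, ← Finset.mul_sum, sum_code]
      rw [Finset.sum_sub_distrib, Finset.sum_sub_distrib, Finset.sum_add_distrib,
        S1, S2, S3, S4]
      linear_combination code α i * hkey
    have hXunit : IsUnit X := ⟨⟨X, Z, hXZ, hZX⟩, rfl⟩
    have hXinv : X⁻¹ = Z := Matrix.inv_eq_right_inv hXZ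
    refine ⟨X, M * X, ?_, ?_, hXunit, ?_, ?_⟩
    · intro i j
      simp only [hX_def, Matrix.of_apply]
      have := code_nonneg α i
      split <;> nlinarith
    · intro i j
      have : (M * X) i j = M i j + t * u i := by
        simp only [Matrix.mul_apply, hX_def, Matrix.of_apply]
        have expand : ∀ k, M i k * ((if k = j then (1:ℝ) else 0) + t * code α k)
            = M i k * (if k = j then (1:ℝ) else 0) + t * (M i k * code α k) := by
          intro k; ring
        simp only [expand]
        have S1 : ∑ k, M i k * (if k = j then (1:ℝ) else 0) = M i j := by simp
        rw [Finset.sum_add_distrib, ← Finset.mul_sum, hMc, S1]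
      rw [this]; exact htbig i j
    · intro i
      rw [hXinv]
      have : Z.mulVec (code α) i = code α i * (1 - s * a) := by
        simp only [Matrix.mulVec, dotProduct, hZ_def, Matrix.of_apply]
        have expand : ∀ k, ((if i = k then (1:ℝ) else 0) - s * code α i) * code α k
            = (if i = k then (1:ℝ) else 0) * code α k - s * code α i * code α k := by
          intro k; ring
        simp only [expand]
        have S1 : ∑ k, (if i = k then (1:ℝ) else 0) * code α k = code α i := by
          simp [ite_mul, one_mul, zero_mul]
        rw [Finset.sum_sub_distrib, S1, ← Finset.mul_sum, sum_code]
        ring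
      rw [this]
      have hsa : s * a ≤ 1 := by
        rw [hs_def, div_mul_eq_mul_div, div_le_one hden]; nlinarith
      have := code_nonneg α i
      nlinarith
    · rw [hXinv]
      have hDD : Matrix.diagonal (sgn α) * Matrix.diagonal (sgn α) = 1 := by
        rw [Matrix.diagonal_mul_diagonal]
        ext i j
        simp [Matrix.diagonal, Matrix.one_apply, sgn_sq]
      have : Matrix.diagonal (sgn α) * (M * X) * Z
          = Matrix.diagonal (sgn α) * Matrix.diagonal (sgn α) * (W * (X * Z)) := by
        rw [hM]; simp only [Matrix.mul_assoc]
      rw [this, hDD, hXZ, one_mul, mul_one]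
  · rintro ⟨X, Y, hXnn, hY, hXunit, hvnn, hW⟩
    intro i
    set v : Fin n → ℝ := X⁻¹.mulVec (code α) with hv_def
    have hXinvX : X * X⁻¹ = 1 := Matrix.mul_nonsing_inv X
      ((Matrix.isUnit_iff_isUnit_det X).mp hXunit)
    have hcv : X.mulVec v = code α := by
      rw [hv_def, Matrix.mulVec_mulVec, hXinvX, Matrix.one_mulVec]
    have hvne : ∃ j, 0 < v j := by
      by_contra h
      push_neg at h
      have hv0 : v = 0 := by
        funext j; exact le_antisymm (h j) (hvnn j)
      obtain ⟨i₀, hi₀⟩ := hα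
      have : code α i₀ = 0 := by
        rw [← hcv, hv0, Matrix.mulVec_zero]; rfl
      simp [code, hi₀] at this
    have hWc : ∑ j ∈ α, W i j = sgn α i * (Y.mulVec v) i := by
      rw [← sum_mul_code]
      have : ∑ j, W i j * code α j = W.mulVec (code α) i := by
        simp [Matrix.mulVec, dotProduct]
      rw [this, hW, ← Matrix.mulVec_mulVec, ← hv_def, ← Matrix.mulVec_mulVec]
      simp [Matrix.mulVec_diagonal]
    rw [hWc, ← mul_assoc, sgn_sq, one_mul]
    simp only [Matrix.mulVec, dotProduct]
    obtain ⟨j₀, hj₀⟩ := hvne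
    apply Finset.sum_pos'
    · intro j _
      exact mul_nonneg (hY i j).le (hvnn j)
    · exact ⟨j₀, Finset.mem_univ j₀, mul_pos (hY i j₀) hj₀⟩
end
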